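/- arXiv:1109.0343 — 2 statements merged into one kernel-verified Lean document; each statement's English description precedes it below -/
import Mathlib

section
/- For α > 0 and π ∈ (0,1), define f_1(π|α) = α(1-π)^{α-1} and for i ≥ 2, f_i(π|α) = (α^i/(i-2)!) ∫_π^1 w^{α-2}(ln(1/w))^{i-2}(1-π/w)^{α-1} dw. Then ∑_{i=1}^∞ f_i(π|α) = α π^{-1} (1-π)^{α-1}. -/
/-!
Summing the series under the integral sign, `∑_{k ≥ 0} (α ln(1/w))^k / k! = w^{-α}`, so the terms
`i ≥ 2` add up to `α² ∫_π^1 w^{-2} (1 - π/w)^{α-1} dw`; the interchange is dominated convergence,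
the nonnegative terms dominating themselves. The integrand has the primitive `(1 - π/w)^α / (απ)`,
so the integral is `α (1-π)^α / π`, and adding `f_1 = α (1-π)^{α-1}` gives `α π⁻¹ (1-π)^{α-1}`.
-/

open Real MeasureTheory intervalIntegral

theorem hasSum_integral_of_nonneg_of_hasSum {α : Type*} [MeasurableSpace α] {μ : Measure α}
    {F : ℕ → α → ℝ} {G : α → ℝ} (hF_meas : ∀ n, AEStronglyMeasurable (F n) μ)
    (hF_nonneg : ∀ n, 0 ≤ᵐ[μ] F n) (hG : Integrable G μ)
    (h_lim : ∀ᵐ x ∂μ, HasSum (fun n => F n x) (G x)) :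
    HasSum (fun n => ∫ x, F n x ∂μ) (∫ x, G x ∂μ) := by
  refine hasSum_integral_of_dominated_convergence F hF_meas
    (fun n => (hF_nonneg n).mono fun x hx => (Real.norm_of_nonneg hx).le)
    (h_lim.mono fun x hx => hx.summable) ?_ h_lim
  exact hG.congr (h_lim.mono fun x hx => hx.tsum_eq.symm)

section OneSubDivRpow

variable {a p b : ℝ}

theorem hasDerivAt_one_sub_div_rpow_div (ha : a ≠ 0) (hp : p ≠ 0) {w : ℝ} (hw : w ≠ 0)
    (hpw : p ≠ w) :
    HasDerivAt (fun x => (1 - p / x) ^ a / (a * p)) ((w ^ 2)⁻¹ * (1 - p / w) ^ (a - 1)) w := by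
  have hbase : 1 - p / w ≠ 0 := sub_ne_zero.2 fun h => hpw ((div_eq_one_iff_eq hw).1 h.symm)
  have h := ((((hasDerivAt_inv hw).const_mul p).const_sub 1).rpow_const (p := a)
    (Or.inl hbase)).div_const (a * p)
  simp only [div_eq_mul_inv (b := w)] at h ⊢
  refine h.congr_deriv ?_
  field_simp

theorem continuousOn_one_sub_div_rpow_div (ha : 0 < a) (hp : 0 < p) :
    ContinuousOn (fun x => (1 - p / x) ^ a / (a * p)) (Set.Icc p b) := by
  intro x hx
  have hx0 : x ≠ 0 := (hp.trans_le hx.1).ne'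
  exact ((continuousAt_const.sub (continuousAt_const.div continuousAt_id hx0)).rpow_const
    (Or.inr ha.le)).div_const _ |>.continuousWithinAt

theorem integrableOn_inv_sq_mul_one_sub_div_rpow (ha : 0 < a) (hp : 0 < p) :
    IntegrableOn (fun w => (w ^ 2)⁻¹ * (1 - p / w) ^ (a - 1)) (Set.Ioc p b) := by
  refine integrableOn_deriv_of_nonneg (continuousOn_one_sub_div_rpow_div ha hp)
    (fun w hw => hasDerivAt_one_sub_div_rpow_div ha.ne' hp.ne' (hp.trans hw.1).ne' hw.1.ne)
    fun w hw => ?_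
  have hw0 : 0 < w := hp.trans hw.1
  have : 0 ≤ 1 - p / w := sub_nonneg.2 ((div_le_one hw0).2 hw.1.le)
  positivity

theorem integral_inv_sq_mul_one_sub_div_rpow (ha : 0 < a) (hp : 0 < p) (hpb : p ≤ b) :
    ∫ w in p..b, (w ^ 2)⁻¹ * (1 - p / w) ^ (a - 1) = (1 - p / b) ^ a / (a * p) := by
  rw [integral_eq_sub_of_hasDerivAt_of_le hpb (continuousOn_one_sub_div_rpow_div ha hp)
    (fun w hw => hasDerivAt_one_sub_div_rpow_div ha.ne' hp.ne' (hp.trans hw.1).ne' hw.1.ne)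
    ((intervalIntegrable_iff_integrableOn_Ioc_of_le hpb).2
      (integrableOn_inv_sq_mul_one_sub_div_rpow ha hp))]
  simp [div_self hp.ne', zero_rpow ha.ne']

end OneSubDivRpow

theorem hasSum_rpow_mul_log_one_div_pow (a : ℝ) {w : ℝ} (hw : 0 < w) :
    HasSum (fun k : ℕ => a ^ (k + 2) / (k.factorial : ℝ) * (w ^ (a - 2) * log (1 / w) ^ k))
      (a ^ 2 * (w ^ 2)⁻¹) := by
  have hexp : exp (a * log (1 / w)) = w ^ (-a) := by
    rw [mul_comm, ← rpow_def_of_pos (one_div_pos.2 hw), one_div, inv_rpow hw.le, rpow_neg hw.le]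
  have hpow : w ^ (a - 2) * w ^ (-a) = (w ^ 2)⁻¹ := by
    rw [← rpow_add hw, show a - 2 + -a = -(2 : ℕ) by push_cast; ring, rpow_neg hw.le, rpow_natCast]
  have h : HasSum (fun k : ℕ => (a * log (1 / w)) ^ k / (k.factorial : ℝ) * (a ^ 2 * w ^ (a - 2)))
      (exp (a * log (1 / w)) * (a ^ 2 * w ^ (a - 2))) := by
    rw [exp_eq_exp_ℝ]
    exact (NormedSpace.expSeries_div_hasSum_exp (a * log (1 / w))).mul_right (a ^ 2 * w ^ (a - 2))
  convert h using 1
  · funext k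
    ring
  · rw [hexp, ← hpow]
    ring

/-- With `f_1(π|α) = α(1-π)^{α-1}` and, for `i ≥ 2`,
`f_i(π|α) = (α^i/(i-2)!) ∫_π^1 w^{α-2}(ln(1/w))^{i-2}(1-π/w)^{α-1} dw`,
we have `∑_{i=1}^∞ f_i(π|α) = α π⁻¹ (1-π)^{α-1}`. -/
theorem stmt_5 (a : ℝ) (ha : 0 < a) (p : ℝ) (hp : 0 < p) (hp1 : p < 1)
    (f : ℕ → ℝ)
    (hf1 : f 1 = a * (1 - p) ^ (a - 1))
    (hfi : ∀ i : ℕ, 2 ≤ i →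
      f i = (a ^ i / (Nat.factorial (i - 2) : ℝ)) *
        ∫ w in p..1, w ^ (a - 2) * (Real.log (1 / w)) ^ (i - 2) *
          (1 - p / w) ^ (a - 1)) :
    ∑' i : ℕ, f (i + 1) = a * p⁻¹ * (1 - p) ^ (a - 1) := by
  set F : ℕ → ℝ → ℝ := fun k w =>
    a ^ (k + 2) / (k.factorial : ℝ) * (w ^ (a - 2) * log (1 / w) ^ k) * (1 - p / w) ^ (a - 1)
  have hterm : ∀ k, f (k + 2) = ∫ w in Set.Ioc p 1, F k w := by
    intro k
    rw [hfi (k + 2) (by omega), Nat.add_sub_cancel, integral_of_le hp1.le,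
      ← MeasureTheory.integral_const_mul]
    simp only [F, mul_assoc]
  have hF_nonneg : ∀ k, ∀ w ∈ Set.Ioc p 1, 0 ≤ F k w := by
    intro k w hw
    have hw0 : 0 < w := hp.trans hw.1
    have : 0 ≤ log (1 / w) := log_nonneg (one_le_one_div hw0 hw.2)
    have : 0 ≤ 1 - p / w := sub_nonneg.2 ((div_le_one hw0).2 hw.1.le)
    positivity
  have htail : HasSum (fun k => f (k + 2)) (a * (1 - p) ^ a / p) := by
    have h := hasSum_integral_of_nonneg_of_hasSum (μ := volume.restrict (Set.Ioc p 1)) (F := F)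
      (fun k => by fun_prop) (fun k => ae_restrict_of_forall_mem measurableSet_Ioc (hF_nonneg k))
      ((integrableOn_inv_sq_mul_one_sub_div_rpow ha hp).const_mul (a ^ 2))
      (ae_restrict_of_forall_mem measurableSet_Ioc fun w hw => by
        simpa only [F, mul_assoc] using
          (hasSum_rpow_mul_log_one_div_pow a (hp.trans hw.1)).mul_right ((1 - p / w) ^ (a - 1)))
    rw [MeasureTheory.integral_const_mul, ← integral_of_le hp1.le,
      integral_inv_sq_mul_one_sub_div_rpow ha hp hp1.le] at h
    convert h using 1
    · exact funext hterm
    · field_simp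
  have h1p : (1 - p) ^ a = (1 - p) * (1 - p) ^ (a - 1) := by
    rw [← rpow_one_add' (by linarith) (by linarith), add_sub_cancel]
  rw [htail.zero_add.tsum_eq, zero_add, hf1, h1p]
  field_simp
  ring
end

section
/- For α > 0 and integer M ≥ 1, the expected number of observed atoms in round i of the stick-breaking beta process, ξ_i = γ ∫_0^1 (1-(1-π)^M) f_i(π|α) dπ, satisfies ∑_{i=1}^∞ ξ_i = γ ∑_{n=0}^{M-1} α/(α+n) < ∞. -/
/-!
Since `1 - (1 - π)^M = π ∑_{n<M} (1 - π)^n`, the factor `π⁻¹` of the beta-process intensity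
cancels and `(1 - (1 - π)^M) α π⁻¹ (1 - π)^{α-1} = ∑_{n<M} α (1 - π)^{α+n-1}`, whose integral
over `(0,1)` is `∑_{n<M} α / (α + n)`. The integrands `(1 - (1 - π)^M) f_i(π)` are nonnegative
and sum to this function, so the integrals may be summed term by term (dominated convergence
with the integrands as their own bound).
-/

open Real MeasureTheory intervalIntegral

theorem MeasureTheory.hasSum_integral_of_nonneg {α ι : Type*} [MeasurableSpace α] [Countable ι]
    {μ : Measure α} {F : ι → α → ℝ} {f : α → ℝ}
    (hF_meas : ∀ n, AEStronglyMeasurable (F n) μ) (hF_nonneg : ∀ n, 0 ≤ᵐ[μ] F n)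
    (hf : Integrable f μ) (h_lim : ∀ᵐ x ∂μ, HasSum (fun n => F n x) (f x)) :
    HasSum (fun n => ∫ x, F n x ∂μ) (∫ x, f x ∂μ) := by
  refine hasSum_integral_of_dominated_convergence F hF_meas
    (fun n => (hF_nonneg n).mono fun x hx => (Real.norm_of_nonneg hx).le)
    (h_lim.mono fun x hx => hx.summable) (hf.congr ?_) h_lim
  exact h_lim.mono fun x hx => hx.tsum_eq.symm

theorem summable_of_tsum_ne_zero {ι : Type*} {f : ι → ℝ} (h : ∑' i, f i ≠ 0) :
    Summable f :=
  by_contra fun hf => h (tsum_eq_zero_of_not_summable hf)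

theorem intervalIntegrable_one_sub_rpow {r : ℝ} (hr : -1 < r) :
    IntervalIntegrable (fun p : ℝ => (1 - p) ^ r) volume 0 1 := by
  simpa using ((intervalIntegrable_rpow' (a := 0) (b := 1) hr).comp_sub_left 1).symm

theorem integral_one_sub_rpow {r : ℝ} (hr : -1 < r) :
    ∫ p in (0 : ℝ)..1, (1 - p) ^ r = 1 / (r + 1) := by
  rw [integral_comp_sub_left (fun x : ℝ => x ^ r) 1, sub_self, sub_zero,
    integral_rpow (Or.inl hr), one_rpow, zero_rpow (by linarith)]
  ring

/-- The Lévy intensity `α π⁻¹ (1 - π)^{α-1}` of the beta process with concentration `α` and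
unit mass. -/
noncomputable def betaProcessIntensity (a p : ℝ) : ℝ := a * p⁻¹ * (1 - p) ^ (a - 1)

/-- The probability that an atom of weight `p` is observed in at least one of `M` Bernoulli
draws. -/
def observationProb (M : ℕ) (p : ℝ) : ℝ := 1 - (1 - p) ^ M

theorem betaProcessIntensity_pos {a p : ℝ} (ha : 0 < a) (hp : p ∈ Set.Ioo (0 : ℝ) 1) :
    0 < betaProcessIntensity a p := by
  have := sub_pos.2 hp.2
  have := hp.1
  unfold betaProcessIntensity
  positivity

theorem measurable_observationProb (M : ℕ) : Measurable (observationProb M) := by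
  unfold observationProb
  fun_prop

theorem observationProb_nonneg {p : ℝ} (hp : p ∈ Set.Ioo (0 : ℝ) 1) (M : ℕ) :
    0 ≤ observationProb M p :=
  sub_nonneg.2 (pow_le_one₀ (by linarith [hp.2]) (by linarith [hp.1]))

theorem observationProb_mul_betaProcessIntensity {a p : ℝ} (hp : p ∈ Set.Ioo (0 : ℝ) 1)
    (M : ℕ) :
    observationProb M p * betaProcessIntensity a p =
      ∑ n ∈ Finset.range M, a * (1 - p) ^ (a + n - 1) := by
  have hq : 0 < 1 - p := sub_pos.2 hp.2
  have hgeom : observationProb M p = p * ∑ n ∈ Finset.range M, (1 - p) ^ n := by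
    unfold observationProb
    linear_combination geom_sum_mul (1 - p) M
  rw [hgeom, betaProcessIntensity, mul_comm p, Finset.sum_mul, Finset.sum_mul]
  refine Finset.sum_congr rfl fun n _ => ?_
  rw [show a + (n : ℝ) - 1 = n + (a - 1) by ring, rpow_add hq, rpow_natCast]
  field_simp [hp.1.ne']

theorem intervalIntegrable_const_mul_one_sub_rpow {a : ℝ} (ha : 0 < a) (n : ℕ) :
    IntervalIntegrable (fun p : ℝ => a * (1 - p) ^ (a + n - 1)) volume 0 1 :=
  (intervalIntegrable_one_sub_rpow (by linarith [n.cast_nonneg (α := ℝ)])).const_mul a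

theorem intervalIntegrable_sum_const_mul_one_sub_rpow {a : ℝ} (ha : 0 < a) (M : ℕ) :
    IntervalIntegrable (fun p : ℝ => ∑ n ∈ Finset.range M, a * (1 - p) ^ (a + n - 1))
      volume 0 1 := by
  simpa only [Finset.sum_fn] using IntervalIntegrable.sum (Finset.range M)
    fun n _ => intervalIntegrable_const_mul_one_sub_rpow ha n

theorem integral_sum_const_mul_one_sub_rpow {a : ℝ} (ha : 0 < a) (M : ℕ) :
    ∫ p in (0 : ℝ)..1, ∑ n ∈ Finset.range M, a * (1 - p) ^ (a + n - 1) =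
      ∑ n ∈ Finset.range M, a / (a + n) := by
  rw [integral_finsetSum fun n _ => intervalIntegrable_const_mul_one_sub_rpow ha n]
  refine Finset.sum_congr rfl fun n _ => ?_
  rw [intervalIntegral.integral_const_mul,
    integral_one_sub_rpow (by linarith [n.cast_nonneg (α := ℝ)]), sub_add_cancel, mul_one_div]

theorem integrableOn_observationProb_mul_betaProcessIntensity {a : ℝ} (ha : 0 < a) (M : ℕ) :
    IntegrableOn (fun p => observationProb M p * betaProcessIntensity a p) (Set.Ioo 0 1) := by
  refine IntegrableOn.congr_fun ?_
    (fun p hp => (observationProb_mul_betaProcessIntensity hp M).symm) measurableSet_Ioo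
  exact ((intervalIntegrable_iff_integrableOn_Ioc_of_le zero_le_one).1
    (intervalIntegrable_sum_const_mul_one_sub_rpow ha M)).mono_set Set.Ioo_subset_Ioc_self

theorem setIntegral_observationProb_mul_betaProcessIntensity {a : ℝ} (ha : 0 < a) (M : ℕ) :
    ∫ p in Set.Ioo 0 1, observationProb M p * betaProcessIntensity a p =
      ∑ n ∈ Finset.range M, a / (a + n) := by
  rw [setIntegral_congr_fun measurableSet_Ioo
      fun p hp => observationProb_mul_betaProcessIntensity hp M,
    ← integral_Ioc_eq_integral_Ioo, ← integral_of_le zero_le_one,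
    integral_sum_const_mul_one_sub_rpow ha]

theorem stmt_18_general (a g : ℝ) (ha : 0 < a) (M : ℕ)
    (f : ℕ → ℝ → ℝ)
    (hmeas : ∀ i, Measurable (f i))
    (hnonneg : ∀ i, ∀ p ∈ Set.Ioo (0:ℝ) 1, 0 ≤ f i p)
    (hsum : ∀ p ∈ Set.Ioo (0:ℝ) 1,
      ∑' i : ℕ, f (i + 1) p = a * p⁻¹ * (1 - p) ^ (a - 1))
    (ξ : ℕ → ℝ)
    (hξ : ∀ i, ξ i = g * ∫ p in (0:ℝ)..1, (1 - (1 - p) ^ M) * f i p) :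
    ∑' i : ℕ, ξ (i + 1) = g * ∑ n ∈ Finset.range M, a / (a + n) := by
  have hξ_Ioo : ∀ i, ξ i = g * ∫ p in Set.Ioo 0 1, observationProb M p * f i p := fun i => by
    rw [hξ, integral_of_le zero_le_one, integral_Ioc_eq_integral_Ioo]
    rfl
  have h_lim : ∀ p ∈ Set.Ioo (0 : ℝ) 1, HasSum (fun i => observationProb M p * f (i + 1) p)
      (observationProb M p * betaProcessIntensity a p) := fun p hp => by
    have hsummable : Summable fun i => f (i + 1) p :=
      summable_of_tsum_ne_zero ((hsum p hp).trans_ne (betaProcessIntensity_pos ha hp).ne')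
    have h := hsummable.hasSum.mul_left (observationProb M p)
    rwa [hsum p hp] at h
  have h_integrals : HasSum (fun i => ∫ p in Set.Ioo 0 1, observationProb M p * f (i + 1) p)
      (∑ n ∈ Finset.range M, a / (a + n)) := by
    rw [← setIntegral_observationProb_mul_betaProcessIntensity ha M]
    refine hasSum_integral_of_nonneg (fun i => ?_) (fun i => ?_)
      (integrableOn_observationProb_mul_betaProcessIntensity ha M)
      (ae_restrict_of_forall_mem measurableSet_Ioo h_lim)
    · exact ((measurable_observationProb M).mul (hmeas (i + 1))).aestronglyMeasurable
    · exact ae_restrict_of_forall_mem measurableSet_Ioo fun p hp =>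
        mul_nonneg (observationProb_nonneg hp M) (hnonneg (i + 1) p hp)
  simp_rw [hξ_Ioo]
  exact (h_integrals.mul_left g).tsum_eq

/-- Let `f i` be the density of the `i`-th break of a `Beta(1,α)` stick-breaking
process, so that `∑_{i=1}^∞ f_i(π) = α π⁻¹ (1-π)^{α-1}` on `(0,1)`.  Then with
`ξ_i = γ ∫_0^1 (1-(1-π)^M) f_i(π) dπ`, one has
`∑_{i=1}^∞ ξ_i = γ ∑_{n=0}^{M-1} α/(α+n)` (in particular it is finite). -/
theorem stmt_18 (a g : ℝ) (ha : 0 < a) (hg : 0 < g) (M : ℕ) (hM : 1 ≤ M)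
    (f : ℕ → ℝ → ℝ)
    (hmeas : ∀ i, Measurable (f i))
    (hnonneg : ∀ i, ∀ p ∈ Set.Ioo (0:ℝ) 1, 0 ≤ f i p)
    (hsum : ∀ p ∈ Set.Ioo (0:ℝ) 1,
      ∑' i : ℕ, f (i + 1) p = a * p⁻¹ * (1 - p) ^ (a - 1))
    (ξ : ℕ → ℝ)
    (hξ : ∀ i, ξ i = g * ∫ p in (0:ℝ)..1, (1 - (1 - p) ^ M) * f i p) :
    ∑' i : ℕ, ξ (i + 1) = g * ∑ n ∈ Finset.range M, a / (a + n) :=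
  stmt_18_general a g ha M f hmeas hnonneg hsum ξ hξ
end
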